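/- arXiv:1610.05350 — 6 statements merged into one kernel-verified Lean document; each statement's English description precedes it below -/
import Mathlib

section
/- Define Ψ(x,y) = (x·√(1+y) + y·√(1+x)) / (x + y + x·y) for nonnegative reals x, y not both zero, and Ψ(0,0) = 1. Then 0 ≤ Ψ(x,y) ≤ 1 for all x, y ≥ 0. -/
open Real

/-! Since `√(1 + t) ≤ 1 + t / 2`, the numerator of `Ψ` is at most
`x (1 + y / 2) + y (1 + x / 2) = x + y + x y`, its denominator. -/

/-- Ψ(x,y) = (x√(1+y) + y√(1+x))/(x+y+xy) if (x,y) ≠ (0,0), and Ψ(0,0) = 1. -/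
noncomputable def Psi (x y : ℝ) : ℝ :=
  if x = 0 ∧ y = 0 then 1
  else (x * Real.sqrt (1 + y) + y * Real.sqrt (1 + x)) / (x + y + x * y)

lemma add_add_mul_pos {x y : ℝ} (hx : 0 ≤ x) (hy : 0 ≤ y) (h : ¬(x = 0 ∧ y = 0)) :
    0 < x + y + x * y := by
  rcases hx.lt_or_eq with hx' | rfl
  · positivity
  · rcases hy.lt_or_eq with hy' | rfl
    · positivity
    · exact absurd ⟨rfl, rfl⟩ h

lemma mul_sqrt_one_add_add_mul_sqrt_one_add_le {x y : ℝ} (hx : 0 ≤ x) (hy : 0 ≤ y) :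
    x * √(1 + y) + y * √(1 + x) ≤ x + y + x * y :=
  calc x * √(1 + y) + y * √(1 + x) ≤ x * (1 + y / 2) + y * (1 + x / 2) := by
        gcongr <;> exact sqrt_one_add_le (by linarith)
    _ = x + y + x * y := by ring

theorem psi_mem_Icc (x y : ℝ) (hx : 0 ≤ x) (hy : 0 ≤ y) :
    0 ≤ Psi x y ∧ Psi x y ≤ 1 := by
  unfold Psi
  split_ifs with h
  · norm_num
  · have hden := add_add_mul_pos hx hy h
    exact ⟨by positivity,
      (div_le_one hden).2 (mul_sqrt_one_add_add_mul_sqrt_one_add_le hx hy)⟩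
end

section
/- For fixed y > 0, the function x ↦ Ψ(x,y) = (x√(1+y) + y√(1+x))/(x+y+xy) is non-increasing on (0,∞); precisely, its partial derivative with respect to x equals −y(1−√K)²/(2(x+y+xy)²√(1+x)) where K = (1+x)(1+y), which is ≤ 0. -/
/-!
Put `a = √(1+x)` and `b = √(1+y)`. Then `x + y + xy = (ab - 1)(ab + 1)` and
`x√(1+y) + y√(1+x) = (ab - 1)(a + b)`, so `Ψ(x,y) = (a + b)/(1 + ab)`. The Möbius map
`a ↦ (a + b)/(1 + ab)` has derivative `(1 - b²)/(1 + ab)² = -y/(1 + ab)² ≤ 0`; composing with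
`x ↦ √(1+x)` and restoring the cancelled factor `(ab - 1)² = (1 - √K)²` gives the stated formula.
-/

open Real Set

noncomputable def psi (x y : ℝ) : ℝ :=
  (x * √(1 + y) + y * √(1 + x)) / (x + y + x * y)

theorem psi_eq_div_one_add_mul_sqrt {x y : ℝ} (hx : -1 ≤ x) (hy : -1 ≤ y)
    (hxy : x + y + x * y ≠ 0) :
    psi x y = (√(1 + x) + √(1 + y)) / (1 + √(1 + x) * √(1 + y)) := by
  have ha : √(1 + x) ^ 2 = 1 + x := sq_sqrt (by linarith)
  have hb : √(1 + y) ^ 2 = 1 + y := sq_sqrt (by linarith)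
  have hden : x + y + x * y = (√(1 + x) * √(1 + y) - 1) * (1 + √(1 + x) * √(1 + y)) := by
    linear_combination (-√(1 + y) ^ 2) * ha - (1 + x) * hb
  have hnum : x * √(1 + y) + y * √(1 + x) =
      (√(1 + x) * √(1 + y) - 1) * (√(1 + x) + √(1 + y)) := by
    linear_combination (-√(1 + y)) * ha - √(1 + x) * hb
  rw [hden] at hxy
  rw [psi, hnum, hden, mul_div_mul_left _ _ (left_ne_zero_of_mul hxy)]

theorem hasDerivAt_add_div_one_add_mul {t : ℝ} (b : ℝ) (ht : 1 + t * b ≠ 0) :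
    HasDerivAt (fun t => (t + b) / (1 + t * b)) ((1 - b ^ 2) / (1 + t * b) ^ 2) t := by
  refine (((hasDerivAt_id' t).add_const b).fun_div
    (((hasDerivAt_id' t).mul_const b).const_add 1) ht).congr_deriv ?_
  ring

theorem hasDerivAt_psi {x y : ℝ} (hx : 0 < x) (hy : 0 < y) :
    HasDerivAt (fun x => psi x y)
      (-(y * (1 - √((1 + x) * (1 + y))) ^ 2 / (2 * (x + y + x * y) ^ 2 * √(1 + x)))) x := by
  have hsqrt : HasDerivAt (fun x => √(1 + x)) (1 / (2 * √(1 + x))) x := by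
    simpa using ((hasDerivAt_id' x).const_add 1).sqrt (by linarith)
  have heq : (fun x => psi x y) =ᶠ[nhds x]
      fun x => (√(1 + x) + √(1 + y)) / (1 + √(1 + x) * √(1 + y)) := by
    filter_upwards [Ioi_mem_nhds hx] with z (hz : 0 < z)
    exact psi_eq_div_one_add_mul_sqrt (by linarith) (by linarith) (by positivity)
  have hmob := (hasDerivAt_add_div_one_add_mul (√(1 + y)) (by positivity)).comp x hsqrt
  refine (hmob.congr_of_eventuallyEq heq).congr_deriv ?_
  rw [sqrt_mul (by linarith)]
  have ha : √(1 + x) ^ 2 = 1 + x := sq_sqrt (by linarith)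
  have hb : √(1 + y) ^ 2 = 1 + y := sq_sqrt (by linarith)
  have ha0 : 0 < √(1 + x) := sqrt_pos.2 (by linarith)
  have hb0 : 0 < √(1 + y) := sqrt_pos.2 (by linarith)
  generalize √(1 + x) = a at *
  generalize √(1 + y) = b at *
  obtain rfl : x = a ^ 2 - 1 := by linarith
  obtain rfl : y = b ^ 2 - 1 := by linarith
  have hab : a * b - 1 ≠ 0 := by nlinarith
  field_simp
  ring

/-- For fixed `y > 0`, the map `x ↦ Ψ(x,y) = (x√(1+y) + y√(1+x))/(x+y+xy)` has, at each
`x > 0`, derivative `−y(1−√K)²/(2(x+y+xy)²√(1+x))` where `K = (1+x)(1+y)`; this derivative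
is nonpositive, and the map is non-increasing (antitone) on `(0,∞)`. -/
theorem psi_deriv_and_antitone (y : ℝ) (hy : 0 < y) :
    (∀ x : ℝ, 0 < x →
      HasDerivAt (fun x : ℝ =>
          (x * Real.sqrt (1 + y) + y * Real.sqrt (1 + x)) / (x + y + x * y))
        (-(y * (1 - Real.sqrt ((1 + x) * (1 + y))) ^ 2 /
            (2 * (x + y + x * y) ^ 2 * Real.sqrt (1 + x)))) x) ∧
    (∀ x : ℝ, 0 < x →
      -(y * (1 - Real.sqrt ((1 + x) * (1 + y))) ^ 2 /
          (2 * (x + y + x * y) ^ 2 * Real.sqrt (1 + x))) ≤ 0) ∧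
    AntitoneOn (fun x : ℝ =>
        (x * Real.sqrt (1 + y) + y * Real.sqrt (1 + x)) / (x + y + x * y))
      (Set.Ioi (0 : ℝ)) := by
  have hderiv := fun x (hx : 0 < x) => hasDerivAt_psi hx hy
  have hnonpos : ∀ x : ℝ, 0 < x →
      -(y * (1 - √((1 + x) * (1 + y))) ^ 2 / (2 * (x + y + x * y) ^ 2 * √(1 + x))) ≤ 0 :=
    fun x hx => neg_nonpos.2 (by positivity)
  refine ⟨hderiv, hnonpos, antitoneOn_of_hasDerivWithinAt_nonpos (convex_Ioi 0)
    (fun x hx => (hderiv x hx).continuousAt.continuousWithinAt)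
    (fun x hx => (hderiv x (by simpa using hx)).hasDerivWithinAt)
    (fun x hx => hnonpos x (by simpa using hx))⟩
end

section
/- Let X, X' be i.i.d. nonnegative random variables and d > 1. Define s(X,X') = √d·(X+X') / (√(X + X'/d)·√(X' + X/d)) when X > 0 or X' > 0, and s(X,X') = d when X = X' = 0. Then E[s(X,X')] ≥ 2d^{3/2}/(d+1) = 2√d·(1 − 1/(d+1)). -/
/-!
Pointwise, with `a = x + x'/d` and `b = x' + x/d` one has `(d + 1)(x + x') = d (a + b)`, so
`s(x, x') = d^{3/2}/(d+1) · (a + b)/(√a √b) ≥ 2 d^{3/2}/(d+1)` by AM-GM, and at `x = x' = 0`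
the value `d` is also at least `2 d^{3/2}/(d+1)`. The lower bound therefore holds for every
outcome, and integrating it against the probability measure gives the theorem. Integrability
comes from the companion bound `s ≤ d`, valid because `a/b ∈ [1/d, d]`.
-/

open MeasureTheory ProbabilityTheory Real

/-- `s(x,x') = √d (x+x') / (√(x + x'/d) √(x' + x/d))` when `x > 0` or `x' > 0`,
and `s(0,0) = d`. -/
noncomputable def sFun (d x x' : ℝ) : ℝ :=
  if x = 0 ∧ x' = 0 then d
  else Real.sqrt d * (x + x') / (Real.sqrt (x + x' / d) * Real.sqrt (x' + x / d))

lemma two_mul_sqrt_mul_sqrt_le_add {a b : ℝ} (ha : 0 ≤ a) (hb : 0 ≤ b) :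
    2 * (√a * √b) ≤ a + b := by
  nlinarith [sq_nonneg (√a - √b), sq_sqrt ha, sq_sqrt hb]

lemma sqrt_mul_add_le_of_le_mul {a b d : ℝ} (ha : 0 ≤ a) (hb : 0 ≤ b) (hd : 0 ≤ d)
    (hab : a ≤ d * b) (hba : b ≤ d * a) : √d * (a + b) ≤ (d + 1) * (√a * √b) := by
  have h₁ : √b ≤ √d * √a := by rw [← sqrt_mul hd]; exact sqrt_le_sqrt hba
  have h₂ : √a ≤ √d * √b := by rw [← sqrt_mul hd]; exact sqrt_le_sqrt hab
  have expand : (√d * √a - √b) * (√d * √b - √a) = (d + 1) * (√a * √b) - √d * (a + b) := by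
    linear_combination (√a * √b) * sq_sqrt hd - √d * sq_sqrt ha - √d * sq_sqrt hb
  nlinarith [mul_nonneg (sub_nonneg.2 h₁) (sub_nonneg.2 h₂)]

lemma sFun_eq_of_ne_zero {d x x' : ℝ} (hd : 0 < d) (h : ¬(x = 0 ∧ x' = 0)) :
    sFun d x x' = d * √d / (d + 1) *
      ((x + x' / d + (x' + x / d)) / (√(x + x' / d) * √(x' + x / d))) := by
  rw [sFun, if_neg h]
  field_simp
  ring

lemma add_div_pos_of_ne_zero {d x x' : ℝ} (hd : 0 < d) (hx : 0 ≤ x) (hx' : 0 ≤ x')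
    (h : ¬(x = 0 ∧ x' = 0)) : 0 < x + x' / d := by
  rcases hx.lt_or_eq with hx | rfl
  · positivity
  · have : 0 < x' := hx'.lt_of_ne (Ne.symm fun h' => h ⟨rfl, h'⟩)
    positivity

lemma le_sFun {d x x' : ℝ} (hd : 0 < d) (hx : 0 ≤ x) (hx' : 0 ≤ x') :
    2 * d * √d / (d + 1) ≤ sFun d x x' := by
  by_cases h : x = 0 ∧ x' = 0
  · rw [sFun, if_pos h, div_le_iff₀ (by linarith)]
    nlinarith [sq_nonneg (√d - 1), sq_sqrt hd.le]
  have ha := add_div_pos_of_ne_zero hd hx hx' h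
  have hb := add_div_pos_of_ne_zero hd hx' hx (by tauto)
  have hab : 2 ≤ (x + x' / d + (x' + x / d)) / (√(x + x' / d) * √(x' + x / d)) := by
    rw [le_div_iff₀ (by positivity)]
    exact two_mul_sqrt_mul_sqrt_le_add ha.le hb.le
  calc 2 * d * √d / (d + 1) = d * √d / (d + 1) * 2 := by ring
    _ ≤ _ := mul_le_mul_of_nonneg_left hab (by positivity)
    _ = sFun d x x' := (sFun_eq_of_ne_zero hd h).symm

lemma sFun_le {d x x' : ℝ} (hd : 1 ≤ d) (hx : 0 ≤ x) (hx' : 0 ≤ x') : sFun d x x' ≤ d := by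
  have hd₀ : 0 < d := by linarith
  by_cases h : x = 0 ∧ x' = 0
  · rw [sFun, if_pos h]
  have ha := add_div_pos_of_ne_zero hd₀ hx hx' h
  have hb := add_div_pos_of_ne_zero hd₀ hx' hx (by tauto)
  have key := sqrt_mul_add_le_of_le_mul ha.le hb.le hd₀.le ?_ ?_
  · have hratio : (x + x' / d + (x' + x / d)) / (√(x + x' / d) * √(x' + x / d)) ≤
        (d + 1) / √d := by
      rw [div_le_div_iff₀ (by positivity) (by positivity)]
      linarith
    calc sFun d x x' = _ := sFun_eq_of_ne_zero hd₀ h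
      _ ≤ d * √d / (d + 1) * ((d + 1) / √d) := mul_le_mul_of_nonneg_left hratio (by positivity)
      _ = d := by field_simp
  · rw [mul_add, mul_div_cancel₀ _ hd₀.ne']
    linarith [div_le_self hx' hd, le_mul_of_one_le_left hx' hd]
  · rw [mul_add, mul_div_cancel₀ _ hd₀.ne']
    linarith [div_le_self hx hd, le_mul_of_one_le_left hx hd]

lemma measurable_sFun (d : ℝ) : Measurable fun p : ℝ × ℝ => sFun d p.1 p.2 := by
  unfold sFun
  refine Measurable.ite ?_ measurable_const (by fun_prop)
  exact (measurableSet_singleton 0).preimage measurable_fst |>.inter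
    ((measurableSet_singleton 0).preimage measurable_snd)

theorem expectation_sFun_ge_general {Ω : Type*} [MeasurableSpace Ω]
    (μ : Measure Ω) [IsProbabilityMeasure μ] (d : ℝ) (hd : 1 < d)
    (X X' : Ω → ℝ) (hX : Measurable X) (hX' : Measurable X')
    (hXnn : ∀ ω, 0 ≤ X ω) (hX'nn : ∀ ω, 0 ≤ X' ω) :
    2 * d * Real.sqrt d / (d + 1) ≤ ∫ ω, sFun d (X ω) (X' ω) ∂μ := by
  have hlow ω : 2 * d * √d / (d + 1) ≤ sFun d (X ω) (X' ω) :=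
    le_sFun (by linarith) (hXnn ω) (hX'nn ω)
  have hint : Integrable (fun ω => sFun d (X ω) (X' ω)) μ := by
    refine .of_bound ((measurable_sFun d).comp (hX.prodMk hX')).aestronglyMeasurable d
      (.of_forall fun ω => ?_)
    rw [norm_eq_abs, abs_le]
    exact ⟨by linarith [hlow ω, (by positivity : 0 ≤ 2 * d * √d / (d + 1))],
      sFun_le hd.le (hXnn ω) (hX'nn ω)⟩
  simpa using integral_mono (integrable_const _) hint hlow

/-- For i.i.d. nonnegative random variables `X, X'` and `d > 1`,
`E[s(X,X')] ≥ 2 d^{3/2}/(d+1) = 2√d (1 − 1/(d+1))`. -/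
theorem expectation_sFun_ge {Ω : Type*} [MeasurableSpace Ω]
    (μ : Measure Ω) [IsProbabilityMeasure μ] (d : ℝ) (hd : 1 < d)
    (X X' : Ω → ℝ) (hX : Measurable X) (hX' : Measurable X')
    (hXnn : ∀ ω, 0 ≤ X ω) (hX'nn : ∀ ω, 0 ≤ X' ω)
    (hid : IdentDistrib X X' μ μ) (hindep : IndepFun X X' μ) :
    2 * d * Real.sqrt d / (d + 1) ≤ ∫ ω, sFun d (X ω) (X' ω) ∂μ :=
  expectation_sFun_ge_general μ d hd X X' hX hX' hXnn hX'nn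
end

section
/- In the setting of the two-type Galton-Watson tree with parameters a,b (d = (a+b)/2, μ = (a−b)/2, μ² > d), the joint moment generating function M_ℓ(t,s) = E[exp(t·X_ℓ + s·Y_ℓ)] is finite for all real t,s and satisfies the recursion M_ℓ(t,s) = M_{ℓ−1}( d^ℓ·(exp(t/d^ℓ)·cosh(s/μ^ℓ) − 1), μ^ℓ·exp(t/d^ℓ)·sinh(s/μ^ℓ) ) for all ℓ ≥ 1. -/
open MeasureTheory ProbabilityTheory Real
open scoped ENNReal NNReal Nat

set_option linter.deprecated false

/-!
Given generation `ℓ`, the two label counts of generation `ℓ + 1` are independent Poisson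
variables with rates `(a N⁺ + b N⁻)/2` and `(b N⁺ + a N⁻)/2`. The Poisson moment generating
function `E[e^{cZ}] = exp (r (e^c - 1))` turns `E[exp (t X_{ℓ+1} + s Y_{ℓ+1})]` into the
expectation of an exponential that is again linear in `N⁺_ℓ, N⁻_ℓ`, i.e. in `X_ℓ, Y_ℓ`: this is
the recursion. Working with lower Lebesgue integrals, which are always defined, the recursion
also gives finiteness by induction from `M₀ (t, s) = e^{t+s}`.
-/

theorem hasSum_exp_mul_poissonPMFReal (r : ℝ≥0) (c : ℝ) :
    HasSum (fun j : ℕ => exp (c * j) * poissonPMFReal r j) (exp (r * (exp c - 1))) := by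
  have h := (NormedSpace.expSeries_div_hasSum_exp ((r : ℝ) * exp c)).mul_left (exp (-r))
  rw [← exp_eq_exp_ℝ, ← exp_add, show -(r : ℝ) + r * exp c = r * (exp c - 1) by ring] at h
  have hterm : (fun j : ℕ => exp (c * j) * poissonPMFReal r j)
      = fun j : ℕ => exp (-r) * ((r * exp c) ^ j / j !) := by
    funext j
    unfold poissonPMFReal
    rw [mul_pow, ← exp_nat_mul, mul_comm (j : ℝ) c]
    ring
  rw [hterm]
  exact h

theorem tsum_ofReal_exp_mul_poissonPMFReal_mul (r₁ r₂ : ℝ≥0) (α β : ℝ) :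
    ∑' p : ℕ × ℕ, ENNReal.ofReal (exp (α * p.1 + β * p.2) *
        (poissonPMFReal r₁ p.1 * poissonPMFReal r₂ p.2))
      = ENNReal.ofReal (exp (r₁ * (exp α - 1) + r₂ * (exp β - 1))) := by
  have hsum (r : ℝ≥0) (c : ℝ) :
      ∑' j : ℕ, ENNReal.ofReal (exp (c * j) * poissonPMFReal r j)
        = ENNReal.ofReal (exp (r * (exp c - 1))) := by
    rw [← ENNReal.ofReal_tsum_of_nonneg (fun j => mul_nonneg (exp_nonneg _) poissonPMFReal_nonneg)
      (hasSum_exp_mul_poissonPMFReal r c).summable, (hasSum_exp_mul_poissonPMFReal r c).tsum_eq]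
  have hsplit (j k : ℕ) : ENNReal.ofReal (exp (α * j + β * k) *
      (poissonPMFReal r₁ j * poissonPMFReal r₂ k))
      = ENNReal.ofReal (exp (α * j) * poissonPMFReal r₁ j) *
        ENNReal.ofReal (exp (β * k) * poissonPMFReal r₂ k) := by
    rw [← ENNReal.ofReal_mul (mul_nonneg (exp_nonneg _) poissonPMFReal_nonneg), exp_add]
    ring_nf
  simp only [ENNReal.tsum_prod', hsplit, ENNReal.tsum_mul_left, ENNReal.tsum_mul_right, hsum]
  rw [← ENNReal.ofReal_mul (exp_nonneg _), ← exp_add]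

theorem lintegral_comp_eq_tsum_mul_measure_preimage {Ω α : Type*} {m0 : MeasurableSpace Ω}
    {μ : Measure Ω} [MeasurableSpace α] [Countable α] [MeasurableSingletonClass α] {Z : Ω → α}
    (hZ : Measurable Z) (f : α → ℝ≥0∞) :
    ∫⁻ ω, f (Z ω) ∂μ = ∑' x, f x * μ (Z ⁻¹' {x}) := by
  rw [← lintegral_map (measurable_of_countable f) hZ, lintegral_countable']
  simp only [Measure.map_apply hZ (measurableSet_singleton _)]

theorem measure_eq_lintegral_of_condExp_indicator_ae_eq {Ω : Type*} {m m0 : MeasurableSpace Ω}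
    {μ : Measure Ω} [IsFiniteMeasure μ] (hm : m ≤ m0) {s : Set Ω} (hs : MeasurableSet s)
    {g : Ω → ℝ} (hg : μ[s.indicator 1 | m] =ᵐ[μ] g) :
    μ s = ∫⁻ ω, ENNReal.ofReal (g ω) ∂μ := by
  have hg_nonneg : 0 ≤ᵐ[μ] g := by
    filter_upwards [condExp_nonneg (m := m) (ae_of_all μ fun ω =>
      Set.indicator_nonneg (fun _ _ => zero_le_one' ℝ) ω), hg] with ω h h' using h' ▸ h
  calc μ s = ENNReal.ofReal (∫ ω, s.indicator 1 ω ∂μ) := by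
        rw [integral_indicator_one hs, ofReal_measureReal]
    _ = ENNReal.ofReal (∫ ω, g ω ∂μ) := by rw [← integral_condExp hm, integral_congr_ae hg]
    _ = ∫⁻ ω, ENNReal.ofReal (g ω) ∂μ :=
        ofReal_integral_eq_lintegral_ofReal ((integrable_condExp (m := m)).congr hg) hg_nonneg

theorem lintegral_exp_of_condExp_eq_poissonPMFReal {Ω : Type*} {m m0 : MeasurableSpace Ω}
    {μ : Measure Ω} [IsFiniteMeasure μ] (hm : m ≤ m0) {N₁ N₂ : Ω → ℕ} (h₁ : Measurable N₁)
    (h₂ : Measurable N₂) {r₁ r₂ : Ω → ℝ≥0}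
    (hcond : ∀ j k, μ[(fun ω => if N₁ ω = j ∧ N₂ ω = k then (1 : ℝ) else 0) | m]
      =ᵐ[μ] fun ω => poissonPMFReal (r₁ ω) j * poissonPMFReal (r₂ ω) k) (α β : ℝ) :
    ∫⁻ ω, ENNReal.ofReal (exp (α * N₁ ω + β * N₂ ω)) ∂μ
      = ∫⁻ ω, ENNReal.ofReal (exp (r₁ ω * (exp α - 1) + r₂ ω * (exp β - 1))) ∂μ := by
  set q : ℕ × ℕ → Ω → ℝ := fun p ω => poissonPMFReal (r₁ ω) p.1 * poissonPMFReal (r₂ ω) p.2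
  have hq_int (p : ℕ × ℕ) : Integrable (q p) μ := (integrable_condExp (m := m)).congr (hcond _ _)
  have hlaw (p : ℕ × ℕ) :
      μ ((fun ω => (N₁ ω, N₂ ω)) ⁻¹' {p}) = ∫⁻ ω, ENNReal.ofReal (q p ω) ∂μ := by
    refine measure_eq_lintegral_of_condExp_indicator_ae_eq hm
      ((h₁.prodMk h₂) (measurableSet_singleton p)) ?_
    convert hcond p.1 p.2 using 3 with ω
    by_cases h : N₁ ω = p.1 ∧ N₂ ω = p.2 <;> simp [h, Prod.ext_iff]
  calc ∫⁻ ω, ENNReal.ofReal (exp (α * N₁ ω + β * N₂ ω)) ∂μ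
      = ∑' p : ℕ × ℕ, ENNReal.ofReal (exp (α * p.1 + β * p.2)) *
          ∫⁻ ω, ENNReal.ofReal (q p ω) ∂μ := by
        simp only [lintegral_comp_eq_tsum_mul_measure_preimage (h₁.prodMk h₂)
          (fun p : ℕ × ℕ => ENNReal.ofReal (exp (α * p.1 + β * p.2))), hlaw]
    _ = ∑' p : ℕ × ℕ, ∫⁻ ω, ENNReal.ofReal (exp (α * p.1 + β * p.2) * q p ω) ∂μ := by
        simp only [← lintegral_const_mul' _ _ ENNReal.ofReal_ne_top,
          ENNReal.ofReal_mul (exp_nonneg _)]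
    _ = ∫⁻ ω, ∑' p : ℕ × ℕ, ENNReal.ofReal (exp (α * p.1 + β * p.2) * q p ω) ∂μ :=
        (lintegral_tsum fun p => ((hq_int p).aemeasurable.const_mul _).ennreal_ofReal).symm
    _ = ∫⁻ ω, ENNReal.ofReal (exp (r₁ ω * (exp α - 1) + r₂ ω * (exp β - 1))) ∂μ := by
        simp only [q, tsum_ofReal_exp_mul_poissonPMFReal_mul]

theorem two_type_poisson_exponent_eq (a b p m u v : ℝ) :
    (a / 2 * p + b / 2 * m) * (exp (u + v) - 1) + (b / 2 * p + a / 2 * m) * (exp (u - v) - 1)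
      = (a + b) / 2 * (exp u * cosh v - 1) * (p + m) + (a - b) / 2 * exp u * sinh v * (p - m) := by
  rw [sub_eq_add_neg u, exp_add, exp_add, ← cosh_add_sinh v, ← cosh_sub_sinh v]
  ring

theorem lintegral_exp_two_type_poisson_step {Ω : Type*} {m m0 : MeasurableSpace Ω}
    {μ : Measure Ω} [IsFiniteMeasure μ] (hm : m ≤ m0) {a b : ℝ} (ha : 0 ≤ a) (hb : 0 ≤ b)
    {N₁ N₂ N₁' N₂' : Ω → ℕ} (h₁ : Measurable N₁') (h₂ : Measurable N₂')
    (hcond : ∀ j k, μ[(fun ω => if N₁' ω = j ∧ N₂' ω = k then (1 : ℝ) else 0) | m]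
      =ᵐ[μ] fun ω => poissonPMFReal (a / 2 * (N₁ ω : ℝ) + b / 2 * (N₂ ω : ℝ)).toNNReal j *
        poissonPMFReal (b / 2 * (N₁ ω : ℝ) + a / 2 * (N₂ ω : ℝ)).toNNReal k) (u v : ℝ) :
    ∫⁻ ω, ENNReal.ofReal (exp (u * (N₁' ω + N₂' ω) + v * (N₁' ω - N₂' ω))) ∂μ
      = ∫⁻ ω, ENNReal.ofReal (exp ((a + b) / 2 * (exp u * cosh v - 1) * (N₁ ω + N₂ ω)
          + (a - b) / 2 * exp u * sinh v * (N₁ ω - N₂ ω))) ∂μ := by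
  have hrate {x y : ℝ} (hx : 0 ≤ x) (hy : 0 ≤ y) (ω : Ω) :
      ((x / 2 * (N₁ ω : ℝ) + y / 2 * N₂ ω).toNNReal : ℝ) = x / 2 * N₁ ω + y / 2 * N₂ ω :=
    Real.coe_toNNReal _ (by positivity)
  calc _ = ∫⁻ ω, ENNReal.ofReal (exp ((u + v) * N₁' ω + (u - v) * N₂' ω)) ∂μ :=
        lintegral_congr fun ω => by ring_nf
    _ = _ := lintegral_exp_of_condExp_eq_poissonPMFReal hm h₁ h₂ hcond _ _
    _ = _ := lintegral_congr fun ω => by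
        rw [hrate ha hb, hrate hb ha, two_type_poisson_exponent_eq]

theorem two_type_galton_watson_mgf_recursion_general
    {Ω : Type*} {m0 : MeasurableSpace Ω} (μPr : Measure Ω) [IsProbabilityMeasure μPr]
    (ℱ : Filtration ℕ m0) (a b : ℝ) (hb : 0 ≤ b) (hab : b < a)
    (Np Nm : ℕ → Ω → ℕ)
    (hadaptp : ∀ ℓ, @Measurable Ω ℕ (ℱ ℓ) _ (Np ℓ))
    (hadaptm : ∀ ℓ, @Measurable Ω ℕ (ℱ ℓ) _ (Nm ℓ))
    (hNp0 : ∀ ω, Np 0 ω = 1) (hNm0 : ∀ ω, Nm 0 ω = 0)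
    (hcond : ∀ ℓ j k,
      μPr[(fun ω => if Np (ℓ + 1) ω = j ∧ Nm (ℓ + 1) ω = k then (1 : ℝ) else 0) | ℱ ℓ]
        =ᵐ[μPr] fun ω =>
          poissonPMFReal (a / 2 * (Np ℓ ω : ℝ) + b / 2 * (Nm ℓ ω : ℝ)).toNNReal j *
          poissonPMFReal (b / 2 * (Np ℓ ω : ℝ) + a / 2 * (Nm ℓ ω : ℝ)).toNNReal k) :
    let d : ℝ := (a + b) / 2
    let μ : ℝ := (a - b) / 2
    let X : ℕ → Ω → ℝ := fun ℓ ω => ((Np ℓ ω : ℝ) + (Nm ℓ ω : ℝ)) / d ^ ℓ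
    let Y : ℕ → Ω → ℝ := fun ℓ ω => ((Np ℓ ω : ℝ) - (Nm ℓ ω : ℝ)) / μ ^ ℓ
    let M : ℕ → ℝ → ℝ → ℝ := fun ℓ t s => ∫ ω, Real.exp (t * X ℓ ω + s * Y ℓ ω) ∂μPr
    (∀ ℓ t s, Integrable (fun ω => Real.exp (t * X ℓ ω + s * Y ℓ ω)) μPr) ∧
    (∀ ℓ : ℕ, ∀ t s : ℝ,
      M (ℓ + 1) t s =
        M ℓ (d ^ (ℓ + 1) * (Real.exp (t / d ^ (ℓ + 1)) * Real.cosh (s / μ ^ (ℓ + 1)) - 1))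
          (μ ^ (ℓ + 1) * Real.exp (t / d ^ (ℓ + 1)) * Real.sinh (s / μ ^ (ℓ + 1)))) := by
  intro d μ X Y M
  have hd : d ≠ 0 := by simp only [d]; linarith
  have hμ : μ ≠ 0 := by simp only [μ]; linarith
  have hNp (ℓ : ℕ) : Measurable (Np ℓ) := (hadaptp ℓ).mono (ℱ.le ℓ) le_rfl
  have hNm (ℓ : ℕ) : Measurable (Nm ℓ) := (hadaptm ℓ).mono (ℱ.le ℓ) le_rfl
  have step (ℓ : ℕ) (t s : ℝ) :
      ∫⁻ ω, ENNReal.ofReal (exp (t * X (ℓ + 1) ω + s * Y (ℓ + 1) ω)) ∂μPr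
        = ∫⁻ ω, ENNReal.ofReal (exp
            ((d ^ (ℓ + 1) * (exp (t / d ^ (ℓ + 1)) * cosh (s / μ ^ (ℓ + 1)) - 1)) * X ℓ ω
              + (μ ^ (ℓ + 1) * exp (t / d ^ (ℓ + 1)) * sinh (s / μ ^ (ℓ + 1))) * Y ℓ ω)) ∂μPr := by
    calc _ = _ := lintegral_congr fun ω => by simp only [X, Y]; ring_nf
      _ = _ := lintegral_exp_two_type_poisson_step (ℱ.le ℓ) (by linarith) hb
          (hNp _) (hNm _) (hcond ℓ) (t / d ^ (ℓ + 1)) (s / μ ^ (ℓ + 1))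
      _ = _ := lintegral_congr fun ω => by
          congr 2
          simp only [X, Y, pow_succ]
          field_simp
          simp only [d, μ]
          ring
  have hfin (ℓ : ℕ) : ∀ t s : ℝ,
      ∫⁻ ω, ENNReal.ofReal (exp (t * X ℓ ω + s * Y ℓ ω)) ∂μPr ≠ ∞ := by
    induction ℓ with
    | zero => simp [X, Y, hNp0, hNm0]
    | succ ℓ ih => exact fun t s => step ℓ t s ▸ ih _ _
  have hint (ℓ : ℕ) (t s : ℝ) : Integrable (fun ω => exp (t * X ℓ ω + s * Y ℓ ω)) μPr := by
    refine ⟨by fun_prop, ?_⟩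
    rw [hasFiniteIntegral_iff_ofReal (ae_of_all _ fun _ => exp_nonneg _)]
    exact (hfin ℓ t s).lt_top
  refine ⟨hint, fun ℓ t s => ?_⟩
  simp only [M]
  rw [integral_eq_lintegral_of_nonneg_ae (ae_of_all _ fun _ => exp_nonneg _)
      (hint _ _ _).aestronglyMeasurable,
    integral_eq_lintegral_of_nonneg_ae (ae_of_all _ fun _ => exp_nonneg _)
      (hint _ _ _).aestronglyMeasurable, step]

/-- In the two-type Galton-Watson tree with parameters `a, b` (`d = (a+b)/2`,
`μ = (a−b)/2`, `μ² > d`), with `X ℓ = d^{−ℓ}(N⁺ ℓ + N⁻ ℓ)` and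
`Y ℓ = μ^{−ℓ}(N⁺ ℓ − N⁻ ℓ)`, the joint moment generating function
`M ℓ (t,s) = E[exp(t X ℓ + s Y ℓ)]` is finite for all real `t, s` and satisfies
`M ℓ (t,s) = M (ℓ−1) (d^ℓ(e^{t/d^ℓ} cosh(s/μ^ℓ) − 1), μ^ℓ e^{t/d^ℓ} sinh(s/μ^ℓ))`
for all `ℓ ≥ 1`. -/
theorem two_type_galton_watson_mgf_recursion
    {Ω : Type*} {m0 : MeasurableSpace Ω} (μPr : Measure Ω) [IsProbabilityMeasure μPr]
    (ℱ : Filtration ℕ m0) (a b : ℝ) (hb : 0 ≤ b) (hab : b < a)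
    (Np Nm : ℕ → Ω → ℕ)
    (hadaptp : ∀ ℓ, @Measurable Ω ℕ (ℱ ℓ) _ (Np ℓ))
    (hadaptm : ∀ ℓ, @Measurable Ω ℕ (ℱ ℓ) _ (Nm ℓ))
    (hNp0 : ∀ ω, Np 0 ω = 1) (hNm0 : ∀ ω, Nm 0 ω = 0)
    (hcond : ∀ ℓ j k,
      μPr[(fun ω => if Np (ℓ + 1) ω = j ∧ Nm (ℓ + 1) ω = k then (1 : ℝ) else 0) | ℱ ℓ]
        =ᵐ[μPr] fun ω =>
          poissonPMFReal (a / 2 * (Np ℓ ω : ℝ) + b / 2 * (Nm ℓ ω : ℝ)).toNNReal j *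
          poissonPMFReal (b / 2 * (Np ℓ ω : ℝ) + a / 2 * (Nm ℓ ω : ℝ)).toNNReal k)
    (hd : 1 < (a + b) / 2) (hμ : (a + b) / 2 < ((a - b) / 2) ^ 2) :
    let d : ℝ := (a + b) / 2
    let μ : ℝ := (a - b) / 2
    let X : ℕ → Ω → ℝ := fun ℓ ω => ((Np ℓ ω : ℝ) + (Nm ℓ ω : ℝ)) / d ^ ℓ
    let Y : ℕ → Ω → ℝ := fun ℓ ω => ((Np ℓ ω : ℝ) - (Nm ℓ ω : ℝ)) / μ ^ ℓ
    let M : ℕ → ℝ → ℝ → ℝ := fun ℓ t s => ∫ ω, Real.exp (t * X ℓ ω + s * Y ℓ ω) ∂μPr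
    (∀ ℓ t s, Integrable (fun ω => Real.exp (t * X ℓ ω + s * Y ℓ ω)) μPr) ∧
    (∀ ℓ : ℕ, ∀ t s : ℝ,
      M (ℓ + 1) t s =
        M ℓ (d ^ (ℓ + 1) * (Real.exp (t / d ^ (ℓ + 1)) * Real.cosh (s / μ ^ (ℓ + 1)) - 1))
          (μ ^ (ℓ + 1) * Real.exp (t / d ^ (ℓ + 1)) * Real.sinh (s / μ ^ (ℓ + 1)))) :=
  two_type_galton_watson_mgf_recursion_general μPr ℱ a b hb hab Np Nm hadaptp hadaptm hNp0 hNm0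
    hcond
end

section
/- Let c denote the conductance (from root to infinity) of a Poisson(d) Galton-Watson tree (c = 0 on extinction). The conductance satisfies the distributional fixed-point equation c =_d Σ_{i=1}^{L} c_i/(1+c_i) with L ~ Poisson(d) independent of i.i.d. copies c_i of c. Consequently E[c] ≤ d − 1 and Var(c) ≤ d for all d > 1. -/
/-!
Write `φ x = x / (1 + x)`. Conditionally on `L = k` the right-hand side of the fixed-point
equation is a sum of `k` i.i.d. copies of `φ c` independent of `L`, so the factorial moments
`E[L] = d`, `E[L (L - 1)] = d²` of the Poisson law give `E[c] = d E[φ c]` and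
`Var c = d E[(φ c)²]`. Since `0 ≤ φ ≤ 1` on `[0, ∞)` the second identity gives `Var c ≤ d`.
Since `φ` is concave, Jensen gives `E[φ c] ≤ φ (E c)`, i.e. `m ≤ d m / (1 + m)` for `m = E[c]`,
whence `m ≤ d - 1`.
-/

open MeasureTheory ProbabilityTheory Finset Real
open scoped Nat

theorem hasSum_descFactorial_mul_poisson (x : ℝ) (j : ℕ) :
    HasSum (fun k : ℕ => (k.descFactorial j : ℝ) * (exp (-x) * x ^ k / k !)) (x ^ j) := by
  rw [← hasSum_nat_add_iff' j]
  have hhead : ∑ k ∈ range j, (k.descFactorial j : ℝ) * (exp (-x) * x ^ k / k !) = 0 :=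
    sum_eq_zero fun k hk => by
      rw [Nat.descFactorial_eq_zero_iff_lt.mpr (mem_range.mp hk), Nat.cast_zero, zero_mul]
  have hshift (n : ℕ) : ((n + j).descFactorial j : ℝ) * (exp (-x) * x ^ (n + j) / (n + j)!) =
      exp (-x) * x ^ j * (x ^ n / n !) := by
    rw [← Nat.factorial_mul_descFactorial (Nat.le_add_left j n), Nat.add_sub_cancel]
    push_cast
    field_simp
    ring
  simp only [hshift, hhead, sub_zero]
  have h := (NormedSpace.expSeries_div_hasSum_exp x).mul_left (exp (-x) * x ^ j)
  rwa [← exp_eq_exp_ℝ, mul_right_comm, ← exp_add, neg_add_cancel, exp_zero, one_mul] at h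

theorem hasSum_setIntegral_fiber {Ω ι E : Type*} [MeasurableSpace Ω] {μ : Measure Ω}
    [Countable ι] [MeasurableSpace ι] [MeasurableSingletonClass ι]
    [NormedAddCommGroup E] [NormedSpace ℝ E] {N : Ω → ι} (hN : Measurable N) {f : Ω → E}
    (hf : Integrable f μ) :
    HasSum (fun k => ∫ ω in {ω | N ω = k}, f ω ∂μ) (∫ ω, f ω ∂μ) := by
  have hcover : (⋃ k, {ω | N ω = k}) = Set.univ :=
    Set.iUnion_eq_univ_iff.mpr fun ω => ⟨N ω, rfl⟩
  have hdisj : Pairwise (Function.onFun Disjoint fun k => {ω | N ω = k}) := fun k l hkl =>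
    Set.disjoint_left.mpr fun ω (hk : N ω = k) (hl : N ω = l) => hkl (hk ▸ hl)
  simpa only [hcover, setIntegral_univ] using
    hasSum_integral_iUnion (s := fun k => {ω | N ω = k}) (fun k => hN (measurableSet_singleton k))
      hdisj (by rw [hcover]; exact hf.integrableOn)

theorem ProbabilityTheory.IndepFun.setIntegral_preimage_eq {Ω β : Type*} [MeasurableSpace Ω]
    {μ : Measure Ω} [MeasurableSpace β] {X : Ω → β} {Z : Ω → ℝ}
    (hXZ : IndepFun X Z μ) (hX : Measurable X) {s : Set β} (hs : MeasurableSet s)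
    (hZ : AEStronglyMeasurable Z μ) :
    ∫ ω in X ⁻¹' s, Z ω ∂μ = μ.real (X ⁻¹' s) * ∫ ω, Z ω ∂μ := by
  have hs1 : Measurable (s.indicator (1 : β → ℝ)) := measurable_one.indicator hs
  have hprod := (hXZ.comp hs1 measurable_id).integral_mul_eq_mul_integral
    (hs1.comp hX).aestronglyMeasurable hZ
  have hindicator : (X ⁻¹' s).indicator Z = (s.indicator 1 ∘ X) * id ∘ Z := by
    ext ω
    by_cases hω : X ω ∈ s <;> simp [hω]
  rw [← integral_indicator (hX hs), hindicator, hprod, ← integral_indicator_one (hX hs)]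
  rfl

theorem ProbabilityTheory.iIndepFun.option_elim_comp {Ω ι β : Type*} [MeasurableSpace Ω]
    {μ : Measure Ω} [MeasurableSpace β] {f₀ : Ω → β} {f : ι → Ω → β}
    (h : iIndepFun (fun o : Option ι => Option.elim o f₀ f) μ) {g : β → β} (hg : Measurable g) :
    iIndepFun (fun o : Option ι => Option.elim o f₀ fun i ω => g (f i ω)) μ := by
  convert h.comp (fun o => Option.elim o id fun _ => g)
    (by rintro (_ | i) <;> simp [measurable_id, hg]) using 1
  ext (_ | i) <;> rfl

section CompoundPoisson

variable {Ω : Type*} [MeasurableSpace Ω] {μ : Measure Ω} {N : Ω → ℕ} {Y : ℕ → Ω → ℝ}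
  {X : Ω → ℝ} {d : ℝ}

theorem integral_sum_range_of_identDistrib (hX : Integrable X μ)
    (hY : ∀ i, IdentDistrib (Y i) X μ μ) (k : ℕ) :
    ∫ ω, ∑ i ∈ range k, Y i ω ∂μ = k * ∫ ω, X ω ∂μ := by
  rw [integral_finsetSum _ fun i _ => (hY i).integrable_iff.mpr hX]
  simp [(hY _).integral_eq]

theorem integral_sum_range_sq_of_identDistrib [IsProbabilityMeasure μ] (hX : MemLp X 2 μ)
    (hY : ∀ i, IdentDistrib (Y i) X μ μ) (hpair : Pairwise fun i j => IndepFun (Y i) (Y j) μ)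
    (k : ℕ) :
    ∫ ω, (∑ i ∈ range k, Y i ω) ^ 2 ∂μ =
      k * ∫ ω, X ω ^ 2 ∂μ + k * (k - 1) * (∫ ω, X ω ∂μ) ^ 2 := by
  have hYL2 (i : ℕ) : MemLp (Y i) 2 μ := (hY i).memLp_iff.mpr hX
  have hvar := IndepFun.variance_sum (s := range k) (fun i _ => hYL2 i)
    fun i _ j _ hij => hpair hij
  have hmean := integral_sum_range_of_identDistrib (hX.integrable one_le_two) hY k
  rw [variance_eq_sub (memLp_finsetSum' _ fun i _ => hYL2 i),
    sum_congr rfl fun i _ => (hY i).variance_eq, sum_const, card_range, variance_eq_sub hX] at hvar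
  simp only [Pi.pow_apply, Finset.sum_apply, nsmul_eq_mul] at hvar
  rw [hmean] at hvar
  linear_combination hvar

theorem hasSum_poisson_mul_integral_sum_range (hN : Measurable N)
    (hNlaw : ∀ k, μ.real {ω | N ω = k} = exp (-d) * d ^ k / k !)
    (hY : ∀ i, AEMeasurable (Y i) μ)
    (hindep : iIndepFun (fun o : Option ℕ => Option.elim o (fun ω => (N ω : ℝ)) Y) μ)
    {g : ℝ → ℝ} (hg : Measurable g)
    (hgT : Integrable (fun ω => g (∑ i ∈ range (N ω), Y i ω)) μ) :
    HasSum (fun k : ℕ => exp (-d) * d ^ k / k ! * ∫ ω, g (∑ i ∈ range k, Y i ω) ∂μ)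
      (∫ ω, g (∑ i ∈ range (N ω), Y i ω) ∂μ) := by
  -- On `{N = k}` the random sum is the fixed sum `∑ i < k, Y i`, which is independent of `N`.
  refine (hasSum_setIntegral_fiber hN hgT).congr_fun fun k => ?_
  have hNreal : Measurable fun ω => (N ω : ℝ) := measurable_from_nat.comp hN
  have hfiber : {ω | N ω = k} = (fun ω => (N ω : ℝ)) ⁻¹' {(k : ℝ)} := by ext; simp
  have hindepSum :
      IndepFun (fun ω => (N ω : ℝ)) (fun ω => g (∑ i ∈ range k, Y i ω)) μ := by
    have h := hindep.indepFun_finsetSum_of_notMem₀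
      (by rintro (_ | i) <;> simp [hY, hNreal.aemeasurable])
      (s := (range k).map Function.Embedding.some) (i := none) (by simp)
    simp only [sum_map, Function.Embedding.some_apply, Option.elim_some, Option.elim_none,
      sum_fn] at h
    exact h.symm.comp measurable_id hg
  rw [setIntegral_congr_fun (s := {ω | N ω = k}) (hN (measurableSet_singleton k))
    fun ω (hω : N ω = k) => by rw [hω], ← hNlaw k, hfiber]
  exact (hindepSum.setIntegral_preimage_eq hNreal (measurableSet_singleton _)
    (hg.comp_aemeasurable (by fun_prop)).aestronglyMeasurable).symm

theorem integral_sum_range_poisson (hN : Measurable N)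
    (hNlaw : ∀ k, μ.real {ω | N ω = k} = exp (-d) * d ^ k / k !)
    (hX : Integrable X μ) (hY : ∀ i, IdentDistrib (Y i) X μ μ)
    (hindep : iIndepFun (fun o : Option ℕ => Option.elim o (fun ω => (N ω : ℝ)) Y) μ)
    (hT : Integrable (fun ω => ∑ i ∈ range (N ω), Y i ω) μ) :
    ∫ ω, ∑ i ∈ range (N ω), Y i ω ∂μ = d * ∫ ω, X ω ∂μ := by
  have h := hasSum_poisson_mul_integral_sum_range hN hNlaw (fun i => (hY i).aemeasurable_fst)
    hindep measurable_id hT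
  simp only [id, integral_sum_range_of_identDistrib hX hY] at h
  refine h.unique ?_
  have hmoment := (hasSum_descFactorial_mul_poisson d 1).mul_right (∫ ω, X ω ∂μ)
  simp only [Nat.descFactorial_one, pow_one] at hmoment
  exact hmoment.congr_fun fun k => by ring

theorem variance_sum_range_poisson [IsProbabilityMeasure μ] (hN : Measurable N)
    (hNlaw : ∀ k, μ.real {ω | N ω = k} = exp (-d) * d ^ k / k !)
    (hX : MemLp X 2 μ) (hY : ∀ i, IdentDistrib (Y i) X μ μ)
    (hindep : iIndepFun (fun o : Option ℕ => Option.elim o (fun ω => (N ω : ℝ)) Y) μ)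
    (hT : MemLp (fun ω => ∑ i ∈ range (N ω), Y i ω) 2 μ) :
    variance (fun ω => ∑ i ∈ range (N ω), Y i ω) μ = d * ∫ ω, X ω ^ 2 ∂μ := by
  have hpair : Pairwise fun i j => IndepFun (Y i) (Y j) μ := fun i j hij =>
    hindep.indepFun (i := some i) (j := some j) (by simpa using hij)
  have hmean := integral_sum_range_poisson hN hNlaw (hX.integrable one_le_two) hY hindep
    (hT.integrable one_le_two)
  have h := hasSum_poisson_mul_integral_sum_range hN hNlaw (fun i => (hY i).aemeasurable_fst)
    hindep (g := fun x => x ^ 2) (by fun_prop) hT.integrable_sq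
  simp only [integral_sum_range_sq_of_identDistrib hX hY hpair] at h
  have hmoment := ((hasSum_descFactorial_mul_poisson d 1).mul_right (∫ ω, X ω ^ 2 ∂μ)).add
    ((hasSum_descFactorial_mul_poisson d 2).mul_right ((∫ ω, X ω ∂μ) ^ 2))
  simp only [Nat.descFactorial_one, Nat.cast_descFactorial_two, pow_one] at hmoment
  have hsecond : ∫ ω, (∑ i ∈ range (N ω), Y i ω) ^ 2 ∂μ =
      d * ∫ ω, X ω ^ 2 ∂μ + d ^ 2 * (∫ ω, X ω ∂μ) ^ 2 :=
    h.unique (hmoment.congr_fun fun k => by ring)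
  rw [variance_eq_sub hT]
  simp only [Pi.pow_apply]
  rw [hsecond, hmean]
  ring

end CompoundPoisson

theorem integral_div_one_add_le {Ω : Type*} [MeasurableSpace Ω] {μ : Measure Ω}
    [IsProbabilityMeasure μ] {f : Ω → ℝ} (hf0 : 0 ≤ᵐ[μ] f) (hf : Integrable f μ) :
    ∫ ω, f ω / (1 + f ω) ∂μ ≤ (∫ ω, f ω ∂μ) / (1 + ∫ ω, f ω ∂μ) := by
  set m := ∫ ω, f ω ∂μ
  have hm : 0 ≤ m := integral_nonneg_of_ae hf0
  -- Jensen, through the tangent line at `m` of the concave map `x ↦ x / (1 + x)`.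
  have htangent (x : ℝ) (hx : 0 ≤ x) : x / (1 + x) ≤ m / (1 + m) + (x - m) / (1 + m) ^ 2 := by
    rw [div_add_div _ _ (by positivity) (by positivity), div_le_div_iff₀ (by positivity)
      (by positivity)]
    nlinarith [mul_nonneg (sq_nonneg (x - m)) (sq_nonneg (1 + m))]
  have hint : Integrable (fun ω => f ω / (1 + f ω)) μ := by
    have hmeas : AEMeasurable (fun ω => f ω / (1 + f ω)) μ :=
      hf.aemeasurable.div (aemeasurable_const.add hf.aemeasurable)
    refine hf.mono hmeas.aestronglyMeasurable (hf0.mono fun ω (hω : 0 ≤ f ω) => ?_)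
    rw [Real.norm_eq_abs, Real.norm_eq_abs, abs_of_nonneg hω,
      abs_of_nonneg (div_nonneg hω (by linarith))]
    exact div_le_self hω (by linarith)
  calc ∫ ω, f ω / (1 + f ω) ∂μ ≤ ∫ ω, (m / (1 + m) + (f ω - m) / (1 + m) ^ 2) ∂μ :=
        integral_mono_ae hint (by fun_prop) (hf0.mono fun ω (hω : 0 ≤ f ω) => htangent _ hω)
    _ = m / (1 + m) := by
        rw [integral_add (integrable_const _) (by fun_prop),
          integral_div ((1 + m) ^ 2), integral_sub hf (integrable_const m)]
        simp [m]

theorem div_one_add_mem_Icc {x : ℝ} (hx : 0 ≤ x) : x / (1 + x) ∈ Set.Icc (0 : ℝ) 1 :=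
  ⟨div_nonneg hx (by linarith), div_le_one_of_le₀ (by linarith) (by linarith)⟩

theorem le_sub_one_of_le_mul_div_one_add {m d : ℝ} (hm : 0 ≤ m) (hd : 1 ≤ d)
    (h : m ≤ d * (m / (1 + m))) : m ≤ d - 1 := by
  rw [mul_div_assoc', le_div_iff₀ (by positivity)] at h
  nlinarith

theorem conductance_mean_var_bounds_general
    {Ω : Type*} [MeasurableSpace Ω] (μ : Measure Ω) [IsProbabilityMeasure μ]
    (d : ℝ) (hd : 1 < d)
    (L : Ω → ℕ) (hL : Measurable L)
    (hLpois : ∀ k : ℕ, μ {ω | L ω = k} =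
      ENNReal.ofReal (Real.exp (-d) * d ^ k / (Nat.factorial k : ℝ)))
    (c : Ω → ℝ) (hcnn : ∀ ω, 0 ≤ c ω) (hc2 : MemLp c 2 μ)
    (ci : ℕ → Ω → ℝ)
    (hcopies : ∀ i, IdentDistrib (ci i) c μ μ)
    (hindep : iIndepFun
      (fun o : Option ℕ => Option.elim o (fun ω => (L ω : ℝ)) ci) μ)
    (hfix : IdentDistrib c
      (fun ω => ∑ i ∈ Finset.range (L ω), ci i ω / (1 + ci i ω)) μ μ) :
    (∫ ω, c ω ∂μ) ≤ d - 1 ∧ variance c μ ≤ d := by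
  have hφ : Measurable fun x : ℝ => x / (1 + x) := by fun_prop
  have hLlaw (k : ℕ) : μ.real {ω | L ω = k} = exp (-d) * d ^ k / k ! := by
    rw [measureReal_def, hLpois k, ENNReal.toReal_ofReal (by positivity)]
  have hcopiesφ (i : ℕ) : IdentDistrib (fun ω => ci i ω / (1 + ci i ω))
      (fun ω => c ω / (1 + c ω)) μ μ := (hcopies i).comp hφ
  have hindepφ := hindep.option_elim_comp hφ
  have hφc_mem (ω : Ω) := div_one_add_mem_Icc (hcnn ω)
  have hφc : MemLp (fun ω => c ω / (1 + c ω)) 2 μ :=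
    MemLp.of_bound (hφ.comp_aemeasurable hc2.aemeasurable).aestronglyMeasurable 1
      (ae_of_all _ fun ω => abs_le.mpr ⟨by linarith [(hφc_mem ω).1], (hφc_mem ω).2⟩)
  have hT := hfix.memLp_iff.mp hc2
  have hmean : ∫ ω, c ω ∂μ = d * ∫ ω, c ω / (1 + c ω) ∂μ := hfix.integral_eq.trans
    (integral_sum_range_poisson hL hLlaw (hφc.integrable one_le_two) hcopiesφ hindepφ
      (hT.integrable one_le_two))
  have hvar : variance c μ = d * ∫ ω, (c ω / (1 + c ω)) ^ 2 ∂μ := hfix.variance_eq.trans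
    (variance_sum_range_poisson hL hLlaw hφc hcopiesφ hindepφ hT)
  have hsq : ∫ ω, (c ω / (1 + c ω)) ^ 2 ∂μ ≤ 1 := by
    simpa using integral_mono hφc.integrable_sq (integrable_const 1)
      fun ω => pow_le_one₀ (hφc_mem ω).1 (hφc_mem ω).2
  have hjensen := integral_div_one_add_le (ae_of_all _ hcnn) (hc2.integrable one_le_two)
  exact ⟨le_sub_one_of_le_mul_div_one_add (integral_nonneg hcnn) hd.le
      (hmean.le.trans (mul_le_mul_of_nonneg_left hjensen (by linarith))),
    hvar ▸ mul_le_of_le_one_right (by linarith) hsq⟩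

/-- Let `c` be the conductance of a `Poisson(d)` Galton-Watson tree, i.e. a nonnegative
square-integrable random variable satisfying the distributional fixed-point equation
`c =_d ∑_{i<L} cᵢ/(1+cᵢ)` where `L ~ Poisson(d)` is independent of i.i.d. copies `cᵢ`
of `c`. Then `E[c] ≤ d − 1` and `Var(c) ≤ d`. -/
theorem conductance_mean_var_bounds
    {Ω : Type*} [MeasurableSpace Ω] (μ : Measure Ω) [IsProbabilityMeasure μ]
    (d : ℝ) (hd : 1 < d)
    (L : Ω → ℕ) (hL : Measurable L)
    (hLpois : ∀ k : ℕ, μ {ω | L ω = k} =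
      ENNReal.ofReal (Real.exp (-d) * d ^ k / (Nat.factorial k : ℝ)))
    (c : Ω → ℝ) (hc : Measurable c) (hcnn : ∀ ω, 0 ≤ c ω) (hc2 : MemLp c 2 μ)
    (ci : ℕ → Ω → ℝ) (hci : ∀ i, Measurable (ci i)) (hcinn : ∀ i ω, 0 ≤ ci i ω)
    (hcopies : ∀ i, IdentDistrib (ci i) c μ μ)
    (hindep : iIndepFun
      (fun o : Option ℕ => Option.elim o (fun ω => (L ω : ℝ)) ci) μ)
    (hfix : IdentDistrib c
      (fun ω => ∑ i ∈ Finset.range (L ω), ci i ω / (1 + ci i ω)) μ μ) :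
    (∫ ω, c ω ∂μ) ≤ d - 1 ∧ variance c μ ≤ d :=
  conductance_mean_var_bounds_general μ d hd L hL hLpois c hcnn hc2 ci hcopies hindep hfix
end

section
/- Let B_c be the weighted non-backtracking matrix of a finite graph H = (V,E) with edge weights c: E → ℝ \ {0}, and let u ∈ ℝ satisfy |u| ≠ |c(i,j)|^{−1} for all edges {i,j}. Then det(I − u·B_c) = det(I + D_{c,u} − A_{c,u}) · Π_{{i,j}∈E} (1 − u²c(i,j)²), where A_{c,u} is the symmetric matrix with entries A_{c,u}(i,j) = u·c(i,j)/(1 − u²c(i,j)²) for {i,j} ∈ E and 0 otherwise, and D_{c,u} is diagonal with D_{c,u}(i,i) = Σ_{k: {i,k}∈E} u²c(i,k)²/(1 − u²c(i,k)²). -/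
/-!
Let `K` be the matrix of the involution reversing directed edges, weighted by `u c(e)`, let `T`
be the head incidence matrix, and `R(i, f) = u c(f)` when `f` leaves `i`. Then
`1 - u B_c = (1 + K) - T R`, because `(T R)(e, f) = u c(f)` whenever `f` continues `e`,
backtracking included, and `K` is exactly the backtracking part. Listing one orientation of each
edge first and the reversed ones second turns `1 + K` into the block matrix
`[[1, diag (u c)], [diag (u c), 1]]`, so `det (1 + K) = ∏ (1 - u² c²)`; and `K² = diag (u² c²)`,
so `(1 + K)⁻¹ = diag (1 - u² c²)⁻¹ (1 - K)`. The matrix determinant lemma gives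
`det ((1 + K) - T R) = det (1 + K) · det (1 - R (1 + K)⁻¹ T)`, and expanding the inverse yields
`R (1 + K)⁻¹ T = A_{c,u} - D_{c,u}`.
-/

open Function Matrix

namespace Matrix

section Involution

variable {ι R : Type*} [Fintype ι] [DecidableEq ι] {σ : ι → ι}

def involutionMatrix [Zero R] (σ : ι → ι) (a : ι → R) : Matrix ι ι R :=
  of fun i j => if j = σ i then a i else 0

theorem involutionMatrix_mul_self [Semiring R] (hσ : Involutive σ) (a : ι → R) :
    involutionMatrix σ a * involutionMatrix σ a = diagonal fun i => a i * a (σ i) := by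
  ext i j
  simp only [involutionMatrix, mul_apply, of_apply, ite_mul, zero_mul, Finset.sum_ite_eq',
    Finset.mem_univ, if_true, hσ i, diagonal_apply]
  by_cases h : i = j
  · simp [h]
  · simp [h, Ne.symm h]

theorem det_one_add_involutionMatrix [CommRing R] (hσ : Involutive σ) (a : ι → R)
    (p : ι → Prop) [DecidablePred p] (hp : ∀ i, p (σ i) ↔ ¬p i) :
    det (1 + involutionMatrix σ a) = ∏ i : {i // p i}, (1 - a i * a (σ i)) := by
  let e : {i // p i} ⊕ {i // p i} ≃ ι :=
    (Equiv.sumCongr (Equiv.refl _)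
      ((hσ.toPerm σ).subtypeEquiv fun i => by simp [hp])).trans (Equiv.sumCompl p)
  have hblocks : (1 + involutionMatrix σ a).submatrix e e =
      fromBlocks 1 (diagonal fun i : {i // p i} => a i)
        (diagonal fun i : {i // p i} => a (σ i)) 1 := by
    have hne {i j : ι} (hi : p i) (hj : p j) : i ≠ σ j := fun h => (hp j).1 (h ▸ hi) hj
    ext (⟨i, hi⟩ | ⟨i, hi⟩) (⟨j, hj⟩ | ⟨j, hj⟩) <;>
      simp [involutionMatrix, e, one_apply, diagonal_apply, hσ.injective.eq_iff, hσ _, hne hi hj,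
        hne hj hi, eq_comm]
  rw [← det_submatrix_equiv_self e, hblocks, det_fromBlocks_one₁₁, diagonal_mul_diagonal,
    ← diagonal_one, diagonal_sub, det_diagonal]
  simp [mul_comm]

theorem inv_one_add_involutionMatrix {K : Type*} [Field K] (hσ : Involutive σ) (a : ι → K)
    (ha : ∀ i, 1 - a i * a (σ i) ≠ 0) :
    (1 + involutionMatrix σ a)⁻¹ =
      (diagonal fun i => (1 - a i * a (σ i))⁻¹) * (1 - involutionMatrix σ a) := by
  refine inv_eq_left_inv ?_
  rw [Matrix.mul_assoc, ← (Commute.one_left _).mul_self_sub_mul_self_eq', mul_one,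
    involutionMatrix_mul_self hσ, ← diagonal_one, diagonal_sub, diagonal_mul_diagonal]
  exact congrArg diagonal (funext fun i => inv_mul_cancel₀ (ha i))

end Involution

end Matrix

namespace SimpleGraph

variable {V : Type*} (G : SimpleGraph V)

abbrev DirEdge : Type _ := {p : V × V // G.Adj p.1 p.2}

namespace DirEdge

variable {G}

def reverse (e : G.DirEdge) : G.DirEdge := ⟨e.1.swap, e.2.symm⟩

def edge (e : G.DirEdge) : Sym2 V := s(e.1.1, e.1.2)

theorem reverse_involutive : Involutive (reverse (G := G)) := fun _ => rfl

@[simp] theorem edge_reverse (e : G.DirEdge) : e.reverse.edge = e.edge := Sym2.eq_swap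

end DirEdge

variable [Fintype V] [DecidableRel G.Adj]

theorem sum_dirEdge_eq_sum_neighborFinset {M : Type*} [AddCommMonoid M] (F : V → V → M) :
    ∑ e : G.DirEdge, F e.1.1 e.1.2 = ∑ i, ∑ k ∈ G.neighborFinset i, F i k := by
  rw [← Finset.sum_subtype (Finset.univ.filter fun p : V × V => G.Adj p.1 p.2) (by simp)
    (fun p => F p.1 p.2), Finset.sum_filter, Fintype.sum_prod_type]
  simp [neighborFinset_eq_filter, Finset.sum_filter]

theorem prod_dirEdge_lt_eq_prod_edgeFinset {α M : Type*} [LinearOrder α] [CommMonoid M]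
    {ν : V → α} (hν : Injective ν) (φ : Sym2 V → M) :
    ∏ e : {e : G.DirEdge // ν e.1.1 < ν e.1.2}, φ e.1.edge = ∏ e ∈ G.edgeFinset, φ e := by
  refine Finset.prod_bij (fun e _ => e.1.edge) (fun e _ => G.mem_edgeFinset.2 e.1.2) ?_ ?_
    fun _ _ => rfl
  · rintro ⟨⟨⟨a, b⟩, hab⟩, hlt⟩ - ⟨⟨⟨c, d⟩, hcd⟩, hlt'⟩ - h
    rcases Sym2.eq_iff.1 h with ⟨rfl, rfl⟩ | ⟨rfl, rfl⟩
    · rfl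
    · exact absurd (hlt.trans hlt') (lt_irrefl _)
  · intro e he
    induction e using Sym2.ind with
    | _ x y =>
      have hxy : G.Adj x y := G.mem_edgeFinset.1 he
      rcases lt_or_gt_of_ne (hν.ne hxy.ne) with hlt | hlt
      · exact ⟨⟨⟨(x, y), hxy⟩, hlt⟩, Finset.mem_univ _, rfl⟩
      · exact ⟨⟨⟨(y, x), hxy.symm⟩, hlt⟩, Finset.mem_univ _, Sym2.eq_swap⟩

variable [DecidableEq V] (R : Type*)

section Incidence

variable [Semiring R]

def headIncidence : Matrix G.DirEdge V R := of fun e j => if j = e.1.2 then 1 else 0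

def tailIncidence : Matrix G.DirEdge V R := of fun e j => if j = e.1.1 then 1 else 0

theorem involutionMatrix_reverse_mul_headIncidence (a : G.DirEdge → R) :
    involutionMatrix DirEdge.reverse a * G.headIncidence R = diagonal a * G.tailIncidence R := by
  ext e j
  simp only [involutionMatrix, headIncidence, tailIncidence, mul_apply, of_apply, ite_mul,
    zero_mul, Finset.sum_ite_eq', Finset.mem_univ, if_true, diagonal_apply]
  simp only [DirEdge.reverse, Finset.sum_ite_eq, Finset.mem_univ, if_true]
  by_cases h : j = e.1.1 <;> simp [h]

theorem tailIncidence_transpose_mul_diagonal_mul_headIncidence (φ : Sym2 V → R) :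
    (G.tailIncidence R)ᵀ * diagonal (fun e : G.DirEdge => φ e.edge) * G.headIncidence R =
      of fun i j => if G.Adj i j then φ s(i, j) else 0 := by
  ext i j
  simp only [headIncidence, tailIncidence, mul_apply, of_apply, transpose_apply, diagonal_apply,
    mul_ite, mul_one, mul_zero, ite_mul, zero_mul, one_mul, Finset.sum_ite_eq', Finset.mem_univ,
    if_true, DirEdge.edge]
  simp only [← ite_and, and_comm (a := j = _)]
  rw [sum_dirEdge_eq_sum_neighborFinset G fun x y => if i = x ∧ j = y then φ s(x, y) else 0]
  simp [ite_and]

theorem tailIncidence_transpose_mul_diagonal_mul_tailIncidence (φ : Sym2 V → R) :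
    (G.tailIncidence R)ᵀ * diagonal (fun e : G.DirEdge => φ e.edge) * G.tailIncidence R =
      diagonal fun i => ∑ k ∈ G.neighborFinset i, φ s(i, k) := by
  ext i j
  simp only [tailIncidence, mul_apply, of_apply, transpose_apply, diagonal_apply, mul_ite,
    mul_one, mul_zero, ite_mul, zero_mul, one_mul, Finset.sum_ite_eq', Finset.mem_univ, if_true,
    DirEdge.edge]
  rw [sum_dirEdge_eq_sum_neighborFinset G fun x y =>
    if j = x then if i = x then φ s(x, y) else 0 else 0]
  rcases eq_or_ne i j with rfl | h <;> simp [*]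

end Incidence

variable {R} [CommRing R]

theorem det_one_add_involutionMatrix_reverse (x : Sym2 V → R) :
    det (1 + involutionMatrix DirEdge.reverse fun e : G.DirEdge => x e.edge) =
      ∏ e ∈ G.edgeFinset, (1 - x e ^ 2) := by
  have hν : Injective fun v => Fintype.equivFin V v := (Fintype.equivFin V).injective
  rw [det_one_add_involutionMatrix DirEdge.reverse_involutive _
      (fun e : G.DirEdge => Fintype.equivFin V e.1.1 < Fintype.equivFin V e.1.2)
      fun e => ⟨lt_asymm, fun h => (not_lt.1 h).lt_of_ne (hν.ne e.2.ne.symm)⟩,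
    ← G.prod_dirEdge_lt_eq_prod_edgeFinset hν]
  simp [sq]

def nonBacktrackingMatrix (w : Sym2 V → R) : Matrix G.DirEdge G.DirEdge R :=
  of fun e f => if f.1.1 = e.1.2 ∧ f.1.2 ≠ e.1.1 then w f.edge else 0

theorem one_sub_smul_nonBacktrackingMatrix (w : Sym2 V → R) (u : R) :
    1 - u • G.nonBacktrackingMatrix w =
      1 + involutionMatrix DirEdge.reverse (fun e => u * w e.edge) -
        G.headIncidence R *
          ((G.tailIncidence R)ᵀ * diagonal fun e : G.DirEdge => u * w e.edge) := by
  ext e f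
  have hTS : (G.headIncidence R * (G.tailIncidence R)ᵀ) e f = if f.1.1 = e.1.2 then 1 else 0 := by
    simp [headIncidence, tailIncidence, mul_apply]
  rw [← Matrix.mul_assoc, Matrix.sub_apply, Matrix.sub_apply, Matrix.add_apply, mul_diagonal, hTS]
  simp only [nonBacktrackingMatrix, involutionMatrix, of_apply, Matrix.smul_apply, smul_eq_mul]
  by_cases h1 : f.1.1 = e.1.2
  · by_cases h2 : f.1.2 = e.1.1
    · obtain rfl : f = e.reverse := Subtype.ext (Prod.ext h1 h2)
      simp [h1, h2]
    · have : f ≠ e.reverse := fun h => h2 (h ▸ rfl)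
      simp [h1, h2, this, one_apply]
  · have : f ≠ e.reverse := fun h => h1 (h ▸ rfl)
    simp [h1, this]

variable {K : Type*} [Field K] (w : Sym2 V → K) (u : K)

def iharaAdjMatrix : Matrix V V K :=
  of fun i j => if G.Adj i j then u * w s(i, j) / (1 - u ^ 2 * w s(i, j) ^ 2) else 0

def iharaDegMatrix : Matrix V V K :=
  diagonal fun i =>
    ∑ k ∈ G.neighborFinset i, u ^ 2 * w s(i, k) ^ 2 / (1 - u ^ 2 * w s(i, k) ^ 2)

theorem tailIncidence_transpose_mul_diagonal_mul_inv_mul_headIncidence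
    (h : ∀ e ∈ G.edgeSet, 1 - u ^ 2 * w e ^ 2 ≠ 0) :
    (G.tailIncidence K)ᵀ * diagonal (fun e : G.DirEdge => u * w e.edge) *
        (1 + involutionMatrix DirEdge.reverse fun e : G.DirEdge => u * w e.edge)⁻¹ *
          G.headIncidence K =
      G.iharaAdjMatrix w u - G.iharaDegMatrix w u := by
  have ha (e : G.DirEdge) : 1 - u * w e.edge * (u * w e.reverse.edge) ≠ 0 := by
    simpa [mul_mul_mul_comm, sq] using h e.edge (G.mem_edgeSet.2 e.2)
  rw [inv_one_add_involutionMatrix DirEdge.reverse_involutive _ ha]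
  simp only [DirEdge.edge_reverse]
  set a : G.DirEdge → K := fun e => u * w e.edge
  set d : G.DirEdge → K := fun e => (1 - a e * a e)⁻¹
  have hadj : diagonal a * diagonal d =
      diagonal fun e : G.DirEdge => u * w e.edge / (1 - u ^ 2 * w e.edge ^ 2) := by
    rw [diagonal_mul_diagonal]
    exact congrArg diagonal (funext fun e => by simp only [a, d]; ring)
  have hdeg : diagonal a * diagonal d * diagonal a =
      diagonal fun e : G.DirEdge => u ^ 2 * w e.edge ^ 2 / (1 - u ^ 2 * w e.edge ^ 2) := by
    rw [diagonal_mul_diagonal, diagonal_mul_diagonal]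
    exact congrArg diagonal (funext fun e => by simp only [a, d]; ring)
  calc _ = (G.tailIncidence K)ᵀ * (diagonal a * diagonal d) * G.headIncidence K -
        (G.tailIncidence K)ᵀ * (diagonal a * diagonal d * diagonal a) * G.tailIncidence K := by
        simp only [Matrix.mul_sub, Matrix.sub_mul, Matrix.mul_one, Matrix.mul_assoc,
          involutionMatrix_reverse_mul_headIncidence]
    _ = _ := by
      rw [hdeg, hadj, G.tailIncidence_transpose_mul_diagonal_mul_headIncidence K
        fun c => u * w c / (1 - u ^ 2 * w c ^ 2),
        G.tailIncidence_transpose_mul_diagonal_mul_tailIncidence K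
        fun c => u ^ 2 * w c ^ 2 / (1 - u ^ 2 * w c ^ 2)]
      rfl

theorem det_one_sub_smul_nonBacktrackingMatrix
    (h : ∀ e ∈ G.edgeSet, 1 - u ^ 2 * w e ^ 2 ≠ 0) :
    det (1 - u • G.nonBacktrackingMatrix w) =
      det (1 + G.iharaDegMatrix w u - G.iharaAdjMatrix w u) *
        ∏ e ∈ G.edgeFinset, (1 - u ^ 2 * w e ^ 2) := by
  have hdet : det (1 + involutionMatrix DirEdge.reverse fun e : G.DirEdge => u * w e.edge) =
      ∏ e ∈ G.edgeFinset, (1 - u ^ 2 * w e ^ 2) := by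
    simpa [mul_pow] using G.det_one_add_involutionMatrix_reverse fun e => u * w e
  have hunit : IsUnit (det (1 + involutionMatrix DirEdge.reverse fun e : G.DirEdge =>
      u * w e.edge)) :=
    hdet ▸ isUnit_iff_ne_zero.2
      (Finset.prod_ne_zero_iff.2 fun e he => h e (G.mem_edgeFinset.1 he))
  rw [one_sub_smul_nonBacktrackingMatrix, sub_eq_add_neg, ← Matrix.neg_mul, det_add_mul _ _ hunit,
    Matrix.mul_neg, tailIncidence_transpose_mul_diagonal_mul_inv_mul_headIncidence G w u h, hdet,
    mul_comm, ← sub_eq_add_neg, sub_sub_eq_add_sub]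

end SimpleGraph

theorem one_sub_sq_mul_sq_ne_zero_of_abs_ne_inv {u c : ℝ} (h : |u| ≠ |c|⁻¹) :
    1 - u ^ 2 * c ^ 2 ≠ 0 := by
  intro h0
  have : (|u| * |c|) ^ 2 = 1 := by rw [mul_pow, sq_abs, sq_abs]; linarith
  exact h <| eq_inv_of_mul_eq_one_left <|
    (pow_eq_one_iff_of_nonneg (by positivity) two_ne_zero).1 this

theorem generalized_ihara_bass_general
    {V : Type*} [Fintype V] [DecidableEq V]
    (G : SimpleGraph V) [DecidableRel G.Adj]
    (w : Sym2 V → ℝ)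
    (u : ℝ) (hu : ∀ e ∈ G.edgeSet, |u| ≠ |w e|⁻¹) :
    let E' := {p : V × V // G.Adj p.1 p.2}
    let B : Matrix E' E' ℝ := fun e f =>
      if f.val.1 = e.val.2 ∧ f.val.2 ≠ e.val.1 then w s(f.val.1, f.val.2) else 0
    let A : Matrix V V ℝ := fun i j =>
      if G.Adj i j then u * w s(i, j) / (1 - u ^ 2 * (w s(i, j)) ^ 2) else 0
    let D : Matrix V V ℝ := Matrix.diagonal fun i =>
      ∑ k ∈ G.neighborFinset i, u ^ 2 * (w s(i, k)) ^ 2 / (1 - u ^ 2 * (w s(i, k)) ^ 2)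
    Matrix.det (1 - u • B) =
      Matrix.det (1 + D - A) * ∏ e ∈ G.edgeFinset, (1 - u ^ 2 * (w e) ^ 2) :=
  G.det_one_sub_smul_nonBacktrackingMatrix w u fun e he =>
    one_sub_sq_mul_sq_ne_zero_of_abs_ne_inv (hu e he)

/-- Generalized Ihara–Bass formula for edge-weighted graphs: with `B_c` the weighted
non-backtracking matrix of a finite graph with nonzero edge weights `w`, and `u` with
`|u| ≠ |w(e)|⁻¹` for all edges `e`,
`det(I − u B_c) = det(I + D_{c,u} − A_{c,u}) · ∏_{e ∈ E} (1 − u² w(e)²)`. -/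
theorem generalized_ihara_bass
    {V : Type*} [Fintype V] [DecidableEq V]
    (G : SimpleGraph V) [DecidableRel G.Adj]
    (w : Sym2 V → ℝ)
    (hw : ∀ e ∈ G.edgeSet, w e ≠ 0)
    (u : ℝ) (hu : ∀ e ∈ G.edgeSet, |u| ≠ |w e|⁻¹) :
    let E' := {p : V × V // G.Adj p.1 p.2}
    let B : Matrix E' E' ℝ := fun e f =>
      if f.val.1 = e.val.2 ∧ f.val.2 ≠ e.val.1 then w s(f.val.1, f.val.2) else 0
    let A : Matrix V V ℝ := fun i j =>
      if G.Adj i j then u * w s(i, j) / (1 - u ^ 2 * (w s(i, j)) ^ 2) else 0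
    let D : Matrix V V ℝ := Matrix.diagonal fun i =>
      ∑ k ∈ G.neighborFinset i, u ^ 2 * (w s(i, k)) ^ 2 / (1 - u ^ 2 * (w s(i, k)) ^ 2)
    Matrix.det (1 - u • B) =
      Matrix.det (1 + D - A) * ∏ e ∈ G.edgeFinset, (1 - u ^ 2 * (w e) ^ 2) :=
  generalized_ihara_bass_general G w u hu
end
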